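/- arXiv:1702.04821 — 7 statements merged into one kernel-verified Lean document; each statement's English description precedes it below -/
import Mathlib

section
/- For every nonnegative integer n, the sum over all pairs of nonnegative integers (k, l) with k + l = n of (1/(k+1)) * C(2k, k) * C(2l+2, l+1) equals 2 * C(2n+2, n). Equivalently, ∑_{k=0}^{n} (1/(k+1)) * C(2k, k) * C(2(n-k)+2, n-k+1) = 2 * C(2n+2, n). -/
/-! With `C = ∑ catalan n Xⁿ` and `B = ∑ centralBinom n Xⁿ = (1 - 4X)^(-1/2)`, the relations
`X C² = C - 1` and `(1 - 4X) B = 1 - 2X C` force `B = 1 + 2X C B`, since `1 - 4X` can be cancelled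
in `ℤ⟦X⟧`. Comparing coefficients, `2 ∑_{i+j=m} catalan i * centralBinom j = centralBinom (m + 1)`.
The theorem is the case `m = n + 1` with the term `j = 0` split off, combined with
`centralBinom (n + 1) = catalan (n + 1) + C(2n + 2, n)`. -/

open Finset PowerSeries

theorem Nat.centralBinom_succ_add_two_mul_catalan (n : ℕ) :
    (n + 1).centralBinom + 2 * catalan n = 4 * n.centralBinom := by
  refine Nat.eq_of_mul_eq_mul_left n.add_one_pos ?_
  rw [mul_add, Nat.succ_mul_centralBinom_succ, mul_left_comm, succ_mul_catalan_eq_centralBinom]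
  ring

theorem catalan_succ_add_choose (n : ℕ) :
    catalan (n + 1) + (2 * n + 2).choose n = (n + 1).centralBinom := by
  have h := Nat.choose_succ_right_eq (2 * n + 2) n
  rw [show 2 * n + 2 - n = n + 2 by omega] at h
  refine Nat.eq_of_mul_eq_mul_left (show 0 < n + 2 by omega) ?_
  rw [mul_add, succ_mul_catalan_eq_centralBinom, Nat.centralBinom_eq_two_mul_choose,
    show 2 * (n + 1) = 2 * n + 2 by ring, mul_comm (n + 2) (Nat.choose _ n), ← h]
  ring

namespace PowerSeries

theorem coeff_ofNat_mul {R : Type*} [Semiring R] (a : ℕ) [a.AtLeastTwo] (φ : R⟦X⟧) (n : ℕ) :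
    coeff n (ofNat(a) * φ) = ofNat(a) * coeff n φ := by
  rw [← map_ofNat C a, coeff_C_mul]

noncomputable def centralBinomSeries : ℕ⟦X⟧ := mk Nat.centralBinom

@[simp]
lemma centralBinomSeries_coeff (n : ℕ) : coeff n centralBinomSeries = n.centralBinom := by
  simp [centralBinomSeries]

theorem centralBinomSeries_add_two_mul_X_mul_catalanSeries :
    centralBinomSeries + 2 * X * catalanSeries = 1 + 4 * X * centralBinomSeries := by
  ext (_ | n)
  · simp [centralBinomSeries]
  · simp only [map_add, coeff_one, mul_comm _ X, mul_assoc, coeff_succ_X_mul, coeff_ofNat_mul,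
      centralBinomSeries_coeff, catalanSeries_coeff, Nat.centralBinom_succ_add_two_mul_catalan]
    simp

theorem centralBinomSeries_eq_one_add_two_mul_X_mul_catalanSeries_mul :
    centralBinomSeries = 1 + 2 * X * catalanSeries * centralBinomSeries := by
  let ι := map (Nat.castRingHom ℤ)
  have hι : Function.Injective ι := map_injective _ Nat.cast_injective
  have hC := congrArg ι catalanSeries_sq_mul_X_add_one
  have hB := congrArg ι centralBinomSeries_add_two_mul_X_mul_catalanSeries
  apply hι
  simp only [map_add, map_mul, map_pow, map_one, map_ofNat, ι, map_X] at hC hB ⊢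
  have h : (1 - 4 * X : ℤ⟦X⟧) ≠ 0 := by
    intro h
    simpa using congrArg constantCoeff h
  refine mul_left_cancel₀ h ?_
  linear_combination (1 - 2 * X * map (Nat.castRingHom ℤ) catalanSeries) * hB + 4 * X * hC

end PowerSeries

theorem two_mul_sum_antidiagonal_catalan_mul_centralBinom (n : ℕ) :
    2 * ∑ ij ∈ antidiagonal n, catalan ij.1 * ij.2.centralBinom = (n + 1).centralBinom := by
  have h := congrArg (coeff (n + 1)) centralBinomSeries_eq_one_add_two_mul_X_mul_catalanSeries_mul
  rw [mul_comm 2 X, mul_assoc X, mul_assoc X, map_add, coeff_succ_X_mul, mul_assoc,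
    coeff_ofNat_mul] at h
  simpa [coeff_mul] using h.symm

theorem stmt_0 (n : ℕ) :
    ∑ k ∈ Finset.range (n + 1),
      catalan k * Nat.choose (2 * (n - k) + 2) (n - k + 1) =
    2 * Nat.choose (2 * n + 2) n := by
  have hsplit : ∑ ij ∈ antidiagonal (n + 1), catalan ij.1 * ij.2.centralBinom =
      ∑ k ∈ range (n + 1), catalan k * Nat.choose (2 * (n - k) + 2) (n - k + 1) +
        catalan (n + 1) := by
    rw [Nat.sum_antidiagonal_eq_sum_range_succ (fun i j ↦ catalan i * j.centralBinom),
      sum_range_succ, Nat.sub_self, Nat.centralBinom_zero, mul_one]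
    refine congrArg (· + _) (sum_congr rfl fun k hk ↦ ?_)
    rw [show n + 1 - k = n - k + 1 by grind, Nat.centralBinom_eq_two_mul_choose, mul_add_one]
  have hconv := two_mul_sum_antidiagonal_catalan_mul_centralBinom (n + 1)
  have hrec := Nat.centralBinom_succ_add_two_mul_catalan (n + 1)
  have hcat := catalan_succ_add_choose n
  omega
end

section
/- For every positive integer n, 2 * ∑_{k=0}^{n} C(2n, k) * C(2n+1, k) = C(4n+1, 2n) + C(2n, n)^2. -/
/-!
Write `a k = C(2n, k) C(2n+1, k)` and `b k = C(2n, k) C(2n+1, k+1)`. By Vandermonde,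
`∑_{k ≤ 2n} b k = C(4n+1, 2n)`, and the symmetry `b (2n - k) = a k` turns the upper half of this
sum into `∑_{k ≤ n} a k`. Pascal's rule `C(2n+1, k+1) = C(2n, k) + C(2n, k+1)` makes
`∑_{k ≤ n} a k - ∑_{k < n} b k` telescope to `C(2n, n)^2`.
-/

open Finset

namespace Nat

theorem sum_range_choose_mul_choose_succ_succ (m : ℕ) :
    ∑ k ∈ range (m + 1), m.choose k * (m + 1).choose (k + 1) = (2 * m + 1).choose m := by
  rw [show 2 * m + 1 = m + (m + 1) by ring, add_choose_eq,
    Finset.Nat.sum_antidiagonal_eq_sum_range_succ_mk]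
  refine sum_congr rfl fun k hk => ?_
  rw [choose_symm_of_eq_add (show m + 1 = (m - k) + (k + 1) by grind)]

theorem choose_sub_mul_choose_sub_add_one {m k : ℕ} (hk : k ≤ m) :
    m.choose (m - k) * (m + 1).choose (m - k + 1) = m.choose k * (m + 1).choose k := by
  rw [choose_symm hk, choose_symm_of_eq_add (show m + 1 = (m - k + 1) + k by omega)]

theorem sum_range_succ_choose_mul_choose_eq_add_sq (m n : ℕ) :
    ∑ k ∈ range (n + 1), m.choose k * (m + 1).choose k =
      ∑ k ∈ range n, m.choose k * (m + 1).choose (k + 1) + m.choose n ^ 2 := by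
  induction n with
  | zero => simp
  | succ n ih =>
    rw [sum_range_succ, ih, sum_range_succ, choose_succ_succ]
    ring

theorem sum_range_choose_mul_choose_succ_succ_two_mul (n : ℕ) :
    ∑ k ∈ range (2 * n + 1), (2 * n).choose k * (2 * n + 1).choose (k + 1) =
      ∑ k ∈ range n, (2 * n).choose k * (2 * n + 1).choose (k + 1) +
        ∑ k ∈ range (n + 1), (2 * n).choose k * (2 * n + 1).choose k := by
  rw [show range (2 * n + 1) = range (n + (n + 1)) by congr 1; ring, sum_range_add]
  congr 1
  rw [← sum_range_reflect]
  refine sum_congr rfl fun k hk => ?_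
  have hkn : k ≤ n := Nat.lt_succ_iff.mp (mem_range.mp hk)
  rw [show n + (n + 1 - 1 - k) = 2 * n - k by omega,
    ← choose_sub_mul_choose_sub_add_one (by omega : k ≤ 2 * n)]

end Nat

theorem stmt_3_general (n : ℕ) :
    2 * ∑ k ∈ Finset.range (n + 1), Nat.choose (2 * n) k * Nat.choose (2 * n + 1) k =
    Nat.choose (4 * n + 1) (2 * n) + (Nat.choose (2 * n) n) ^ 2 := by
  rw [show 4 * n + 1 = 2 * (2 * n) + 1 by ring, ← Nat.sum_range_choose_mul_choose_succ_succ,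
    Nat.sum_range_choose_mul_choose_succ_succ_two_mul, two_mul, add_assoc, add_comm,
    Nat.sum_range_succ_choose_mul_choose_eq_add_sq (2 * n) n]
  ring

theorem stmt_3 (n : ℕ) (hn : 0 < n) :
    2 * ∑ k ∈ Finset.range (n + 1), Nat.choose (2 * n) k * Nat.choose (2 * n + 1) k =
    Nat.choose (4 * n + 1) (2 * n) + (Nat.choose (2 * n) n) ^ 2 :=
  stmt_3_general n
end

section
/- For all positive integers n, r, and s, C(n+r, n) * ∑_{k=0}^{s-1} C(r+k, r-1) * C(n+k, n) = C(n+s, n) * ∑_{k=0}^{r-1} C(s+k, s-1) * C(n+k, n). -/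
/-!
Write `D r j = C(n+r, r) C(r+j, j+1) C(n+j, j)`, so that the left-hand side is `∑_{j<s} D r j`.
Two applications of Pascal's rule give `D (i+1) j - D i j = w i j` with
`w i j = C(n+i, i) C(n+j, j) (C(i+j, i) + n (i+j+1)! / ((i+1)! (j+1)!))`,
which is symmetric in `i, j`. Since `D 0 j = 0`, the left-hand side is the double sum of `w`
over the rectangle `[0, r) × [0, s)`, and the symmetry of `w` lets us swap `r` and `s`.
-/

open Finset

namespace Nat

theorem add_one_mul_add_one_mul_choose_mul_choose_mul_choose (n i j : ℕ) :
    (i + 1) * (j + 1) * ((n + i).choose (i + 1) * (n + j).choose j * (i + j + 1).choose i) =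
      n * (i + j + 1) * ((n + i).choose i * (n + j).choose j * (i + j).choose i) := by
  have hi : (n + i).choose (i + 1) * (i + 1) = n * (n + i).choose i := by
    rw [choose_succ_right_eq, Nat.add_sub_cancel, Nat.mul_comm]
  have hj : (i + j + 1).choose i * (j + 1) = (i + j + 1) * (i + j).choose i := by
    rw [choose_symm_of_eq_add (by omega : i + j + 1 = i + (j + 1)),
      choose_symm_add (a := i) (b := j), add_one_mul_choose_eq]
  calc _ = ((n + i).choose (i + 1) * (i + 1)) * (n + j).choose j *
          ((i + j + 1).choose i * (j + 1)) := by ring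
    _ = _ := by rw [hi, hj]; ring

theorem choose_mul_choose_mul_choose_comm (n i j : ℕ) :
    (n + i).choose (i + 1) * (n + j).choose j * (i + j + 1).choose i =
      (n + j).choose (j + 1) * (n + i).choose i * (j + i + 1).choose j := by
  refine Nat.eq_of_mul_eq_mul_left (by positivity : 0 < (i + 1) * (j + 1)) ?_
  rw [add_one_mul_add_one_mul_choose_mul_choose_mul_choose, Nat.mul_comm (i + 1),
    add_one_mul_add_one_mul_choose_mul_choose_mul_choose, Nat.add_comm j i,
    choose_symm_add (a := i) (b := j)]
  ring

end Nat

open Nat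

def rectangleWeight (n i j : ℕ) : ℕ :=
  (n + i).choose i * (n + j).choose j * (i + j).choose i +
    (n + i).choose (i + 1) * (n + j).choose j * (i + j + 1).choose i

theorem rectangleWeight_comm (n i j : ℕ) : rectangleWeight n i j = rectangleWeight n j i := by
  unfold rectangleWeight
  rw [choose_mul_choose_mul_choose_comm, Nat.add_comm j i, choose_symm_add (a := i) (b := j)]
  ring

theorem sum_range_rectangleWeight (n r j : ℕ) :
    ∑ i ∈ range r, rectangleWeight n i j =
      (n + r).choose r * (r + j).choose (j + 1) * (n + j).choose j := by
  induction r with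
  | zero => simp
  | succ r ih =>
    have pascal_n : (n + (r + 1)).choose (r + 1) = (n + r).choose r + (n + r).choose (r + 1) :=
      choose_succ_succ' (n + r) r
    have pascal_j : (r + j + 1).choose (j + 1) = (r + j).choose j + (r + j).choose (j + 1) :=
      choose_succ_succ' (r + j) j
    rw [sum_range_succ, ih, rectangleWeight, show r + 1 + j = r + j + 1 by omega,
      choose_symm_of_eq_add (show r + j + 1 = r + (j + 1) by omega),
      choose_symm_add (a := r) (b := j), pascal_n, pascal_j]
    ring

theorem choose_mul_sum_eq_sum_sum_rectangleWeight (n r s : ℕ) :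
    (n + r).choose r * ∑ j ∈ range s, (r + j).choose (j + 1) * (n + j).choose j =
      ∑ i ∈ range r, ∑ j ∈ range s, rectangleWeight n i j := by
  rw [sum_comm, mul_sum]
  simp only [sum_range_rectangleWeight, Nat.mul_assoc]

theorem choose_mul_sum_comm (n r s : ℕ) :
    (n + r).choose r * ∑ j ∈ range s, (r + j).choose (j + 1) * (n + j).choose j =
      (n + s).choose s * ∑ j ∈ range r, (s + j).choose (j + 1) * (n + j).choose j := by
  rw [choose_mul_sum_eq_sum_sum_rectangleWeight, choose_mul_sum_eq_sum_sum_rectangleWeight,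
    sum_comm]
  exact sum_congr rfl fun j _ => sum_congr rfl fun i _ => rectangleWeight_comm n i j

theorem stmt_5_general (n r s : ℕ) (hr : 0 < r) (hs : 0 < s) :
    Nat.choose (n + r) n *
        ∑ k ∈ Finset.range s, Nat.choose (r + k) (r - 1) * Nat.choose (n + k) n =
    Nat.choose (n + s) n *
        ∑ k ∈ Finset.range r, Nat.choose (s + k) (s - 1) * Nat.choose (n + k) n := by
  have hchoose {m : ℕ} (hm : 0 < m) (k : ℕ) : (m + k).choose (m - 1) = (m + k).choose (k + 1) :=
    choose_symm_of_eq_add (by omega)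
  have hchoose_n (k : ℕ) : (n + k).choose n = (n + k).choose k := choose_symm_add
  simp only [hchoose hr, hchoose hs, hchoose_n]
  exact choose_mul_sum_comm n r s

theorem stmt_5 (n r s : ℕ) (hn : 0 < n) (hr : 0 < r) (hs : 0 < s) :
    Nat.choose (n + r) n *
        ∑ k ∈ Finset.range s, Nat.choose (r + k) (r - 1) * Nat.choose (n + k) n =
    Nat.choose (n + s) n *
        ∑ k ∈ Finset.range r, Nat.choose (s + k) (s - 1) * Nat.choose (n + k) n :=
  stmt_5_general n r s hr hs
end

section
/- For all positive integers n and m, ∑_{i=0}^{n} ∑_{j=0}^{m} C(n, i) * C(m, j) * C(i+j, n) = C(n+m, n) * 2^m. -/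
/-!
Expanding `C(i + j, n)` by Vandermonde's identity separates the double sum into products of the
row sums `∑ i, C(n, i) C(i, a) = C(n, a) 2^(n - a)`. For `a + b = n` the powers of two combine to
`2^m`, and Vandermonde's identity once more sums the remaining `C(n, a) C(m, b)` to `C(n + m, n)`.
-/

open Finset Nat

namespace Nat

theorem sum_range_choose_mul_choose (n k : ℕ) :
    ∑ i ∈ range (n + 1), n.choose i * i.choose k = n.choose k * 2 ^ (n - k) := by
  rcases le_or_gt k n with hkn | hnk
  · obtain ⟨d, rfl⟩ := Nat.exists_eq_add_of_le hkn
    rw [add_assoc, sum_range_add,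
      sum_eq_zero fun i hi => by rw [choose_eq_zero_of_lt (mem_range.1 hi), mul_zero], zero_add]
    simp_rw [choose_mul (le_add_right k _), Nat.add_sub_cancel_left, ← mul_sum, sum_range_choose]
  · rw [choose_eq_zero_of_lt hnk, zero_mul]
    exact sum_eq_zero fun i hi => by
      rw [choose_eq_zero_of_lt (hnk.trans_le' (mem_range_succ_iff.1 hi)), mul_zero]

theorem sum_sum_choose_mul_choose_mul_add_choose (n m k : ℕ) :
    ∑ i ∈ range (n + 1), ∑ j ∈ range (m + 1), n.choose i * m.choose j * (i + j).choose k =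
      ∑ p ∈ antidiagonal k, n.choose p.1 * 2 ^ (n - p.1) * (m.choose p.2 * 2 ^ (m - p.2)) := by
  simp_rw [← sum_range_choose_mul_choose, sum_mul_sum, add_choose_eq, mul_sum]
  refine (sum_congr rfl fun i _ => sum_comm).trans ?_
  rw [sum_comm]
  exact sum_congr rfl fun p _ => sum_congr rfl fun i _ => sum_congr rfl fun j _ => by ring

theorem choose_mul_two_pow_mul_two_pow_sub (m b : ℕ) :
    m.choose b * (2 ^ b * 2 ^ (m - b)) = m.choose b * 2 ^ m := by
  rcases le_or_gt b m with hbm | hmb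
  · rw [← pow_add, Nat.add_sub_cancel' hbm]
  · rw [choose_eq_zero_of_lt hmb, zero_mul, zero_mul]

end Nat

theorem stmt_8_general (n m : ℕ) :
    ∑ i ∈ Finset.range (n + 1), ∑ j ∈ Finset.range (m + 1),
        Nat.choose n i * Nat.choose m j * Nat.choose (i + j) n =
    Nat.choose (n + m) n * 2 ^ m := by
  rw [sum_sum_choose_mul_choose_mul_add_choose, add_choose_eq, sum_mul]
  refine sum_congr rfl fun ⟨a, b⟩ hab => ?_
  obtain rfl : a + b = n := mem_antidiagonal.1 hab
  dsimp only
  rw [Nat.add_sub_cancel_left, mul_assoc _ (m.choose b), ← choose_mul_two_pow_mul_two_pow_sub m b]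
  ring

theorem stmt_8 (n m : ℕ) (hn : 0 < n) (hm : 0 < m) :
    ∑ i ∈ Finset.range (n + 1), ∑ j ∈ Finset.range (m + 1),
        Nat.choose n i * Nat.choose m j * Nat.choose (i + j) n =
    Nat.choose (n + m) n * 2 ^ m :=
  stmt_8_general n m
end

section
/- For every positive integer n, ∑_{0 ≤ i < j ≤ n} C(n, i) * C(n, j) * C(i+j, n) = ∑_{0 ≤ i < j ≤ n} C(n, i) * C(n, j)^2, where both sums range over pairs of integers (i, j) with 0 ≤ i < j ≤ n. -/
/-
Both sides are strict lower triangles of sums over the square `0 ≤ i, j ≤ n`. By Vandermonde,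
`C(i + j, n) = ∑_{k + l = n} C(i, k) C(j, l)`, and `∑_i C(n, i) C(i, k) = C(n, k) 2^(n - k)`,
so both square sums equal `2^n C(2n, n)`. Each square sum splits as lower triangle + upper
triangle + diagonal. The left summand is symmetric in `i, j`; on the right, the reflection
`(i, j) ↦ (n - j, n - i)` exchanges the two triangles. The diagonals agree by
`∑ C(n, i)^2 C(2i, n) = ∑ C(n, i)^3`, which follows from Vandermonde after rewriting
`C(n, i) C(i, k) = C(n, k) C(n - k, n - i)`.
-/

open Finset

section RangeSums

variable {M : Type*} [AddCommMonoid M]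

theorem sum_range_sum_range_eq_triangles_add_diag (N : ℕ) (f : ℕ → ℕ → M) :
    ∑ j ∈ range N, ∑ i ∈ range N, f i j =
      ∑ j ∈ range N, ∑ i ∈ range j, f i j + ∑ j ∈ range N, ∑ i ∈ range j, f j i +
        ∑ i ∈ range N, f i i := by
  induction N with
  | zero => simp
  | succ N ih =>
    simp only [sum_range_succ, sum_add_distrib, ih]
    abel

theorem sum_triangle_reflect (n : ℕ) (f : ℕ → ℕ → M) :
    ∑ j ∈ range (n + 1), ∑ i ∈ range j, f (n - j) (n - i) =
      ∑ j ∈ range (n + 1), ∑ i ∈ range j, f i j := by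
  rw [sum_sigma', sum_sigma']
  refine sum_nbij' (fun p => ⟨n - p.2, n - p.1⟩) (fun p => ⟨n - p.2, n - p.1⟩)
    ?_ ?_ ?_ ?_ ?_
  all_goals rintro ⟨j, i⟩ h
  all_goals simp only [mem_sigma, mem_range, Sigma.mk.injEq] at h ⊢
  · omega
  · omega
  · exact ⟨by omega, heq_of_eq (by omega)⟩
  · exact ⟨by omega, heq_of_eq (by omega)⟩

theorem sum_range_succ_reflect (f : ℕ → M) (n : ℕ) :
    ∑ i ∈ range (n + 1), f (n - i) = ∑ i ∈ range (n + 1), f i := by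
  simpa using sum_range_reflect f (n + 1)

end RangeSums

theorem choose_mul_choose_eq_choose_mul_choose_sub {n i : ℕ} (k : ℕ) (hi : i ≤ n) :
    n.choose i * i.choose k = n.choose k * (n - k).choose (n - i) := by
  rcases lt_or_ge i k with hik | hki
  · rcases lt_or_ge n k with hnk | hkn
    · rw [Nat.choose_eq_zero_of_lt hik, Nat.choose_eq_zero_of_lt hnk, mul_zero, zero_mul]
    · rw [Nat.choose_eq_zero_of_lt hik, Nat.choose_eq_zero_of_lt (by omega : n - k < n - i),
        mul_zero, mul_zero]
  · rw [Nat.choose_mul hki, ← Nat.choose_symm (by omega : i - k ≤ n - k),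
      show n - k - (i - k) = n - i by omega]

theorem sum_range_choose_mul_eq_of_le {a N : ℕ} (h : a ≤ N) (f : ℕ → ℕ) :
    ∑ m ∈ range (N + 1), a.choose m * f m = ∑ m ∈ range (a + 1), a.choose m * f m := by
  refine (sum_subset (range_subset_range.2 (by omega)) fun m _ hm => ?_).symm
  rw [mem_range, not_lt] at hm
  rw [Nat.choose_eq_zero_of_lt (by omega), zero_mul]

theorem sum_range_choose_mul_choose (n k : ℕ) :
    ∑ i ∈ range (n + 1), n.choose i * i.choose k = n.choose k * 2 ^ (n - k) := by
  calc ∑ i ∈ range (n + 1), n.choose i * i.choose k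
      = n.choose k * ∑ i ∈ range (n + 1), (n - k).choose (n - i) := by
        rw [mul_sum]
        exact sum_congr rfl fun i hi =>
          choose_mul_choose_eq_choose_mul_choose_sub k (Nat.lt_succ_iff.1 (mem_range.1 hi))
    _ = n.choose k * 2 ^ (n - k) := by
        rw [sum_range_succ_reflect (fun m => (n - k).choose m), ← Nat.sum_range_choose]
        congr 1
        simpa using sum_range_choose_mul_eq_of_le (Nat.sub_le n k) (fun _ => 1)

theorem sum_range_choose_mul_choose_of_le {k N : ℕ} (l : ℕ) (hk : k ≤ N) :
    ∑ m ∈ range (N + 1), k.choose m * l.choose m = (l + k).choose k := by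
  rw [sum_range_choose_mul_eq_of_le hk, Nat.add_choose_eq,
    Nat.sum_antidiagonal_eq_sum_range_succ_mk]
  refine sum_congr rfl fun m hm => ?_
  rw [mul_comm, Nat.choose_symm (Nat.lt_succ_iff.1 (mem_range.1 hm))]

theorem sum_sum_choose_mul_choose_mul_choose_add (n : ℕ) :
    ∑ j ∈ range (n + 1), ∑ i ∈ range (n + 1), n.choose i * n.choose j * (i + j).choose n =
      2 ^ n * (2 * n).choose n := by
  calc ∑ j ∈ range (n + 1), ∑ i ∈ range (n + 1), n.choose i * n.choose j * (i + j).choose n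
      = ∑ j ∈ range (n + 1), ∑ i ∈ range (n + 1), ∑ p ∈ antidiagonal n,
          n.choose i * i.choose p.1 * (n.choose j * j.choose p.2) := by
        refine sum_congr rfl fun j _ => sum_congr rfl fun i _ => ?_
        rw [Nat.add_choose_eq, mul_sum]
        exact sum_congr rfl fun p _ => by ring
    _ = ∑ p ∈ antidiagonal n, (∑ i ∈ range (n + 1), n.choose i * i.choose p.1) *
          ∑ j ∈ range (n + 1), n.choose j * j.choose p.2 := by
        simp_rw [sum_mul_sum]
        rw [sum_comm]
        exact (sum_congr rfl fun i _ => sum_comm).trans sum_comm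
    _ = ∑ p ∈ antidiagonal n, 2 ^ n * (n.choose p.1 * n.choose p.2) := by
        refine sum_congr rfl fun ⟨k, l⟩ hkl => ?_
        rw [HasAntidiagonal.mem_antidiagonal] at hkl
        rw [sum_range_choose_mul_choose, sum_range_choose_mul_choose,
          show n - k = l by omega, show n - l = k by omega, ← hkl, pow_add]
        ring
    _ = 2 ^ n * (2 * n).choose n := by
        rw [← mul_sum, ← Nat.add_choose_eq, two_mul]

theorem sum_range_choose_sq_mul_choose_two_mul (n : ℕ) :
    ∑ i ∈ range (n + 1), n.choose i ^ 2 * (2 * i).choose n =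
      ∑ i ∈ range (n + 1), n.choose i ^ 3 := by
  calc ∑ i ∈ range (n + 1), n.choose i ^ 2 * (2 * i).choose n
      = ∑ i ∈ range (n + 1), ∑ p ∈ antidiagonal n,
          n.choose i * i.choose p.1 * (n.choose i * i.choose p.2) := by
        refine sum_congr rfl fun i _ => ?_
        rw [two_mul, Nat.add_choose_eq, mul_sum]
        exact sum_congr rfl fun p _ => by ring
    _ = ∑ p ∈ antidiagonal n, ∑ i ∈ range (n + 1),
          n.choose i * i.choose p.1 * (n.choose i * i.choose p.2) := sum_comm
    _ = ∑ p ∈ antidiagonal n, n.choose p.1 ^ 3 := by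
        refine sum_congr rfl fun ⟨k, l⟩ hkl => ?_
        rw [HasAntidiagonal.mem_antidiagonal] at hkl
        calc ∑ i ∈ range (n + 1), n.choose i * i.choose k * (n.choose i * i.choose l)
            = ∑ i ∈ range (n + 1),
                n.choose k * n.choose l * (k.choose (n - i) * l.choose (n - i)) := by
              refine sum_congr rfl fun i hi => ?_
              have hi : i ≤ n := Nat.lt_succ_iff.1 (mem_range.1 hi)
              rw [choose_mul_choose_eq_choose_mul_choose_sub _ hi,
                choose_mul_choose_eq_choose_mul_choose_sub _ hi,
                show n - k = l by omega, show n - l = k by omega]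
              ring
          _ = n.choose k ^ 3 := by
              rw [← mul_sum, sum_range_succ_reflect (fun m => k.choose m * l.choose m),
                sum_range_choose_mul_choose_of_le _ (by omega : k ≤ n), ← hkl,
                Nat.choose_symm_add, add_comm l, Nat.choose_symm_add]
              ring
    _ = ∑ i ∈ range (n + 1), n.choose i ^ 3 :=
        Nat.sum_antidiagonal_eq_sum_range_succ_mk (fun p => n.choose p.1 ^ 3) n

theorem sum_sum_choose_mul_choose_sq (n : ℕ) :
    ∑ j ∈ range (n + 1), ∑ i ∈ range (n + 1), n.choose i * n.choose j ^ 2 =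
      2 ^ n * (2 * n).choose n := by
  simp only [← sum_mul, Nat.sum_range_choose, ← mul_sum, Nat.sum_range_choose_sq]

theorem stmt_10_general (n : ℕ) :
    ∑ j ∈ Finset.range (n + 1), ∑ i ∈ Finset.range j,
        Nat.choose n i * Nat.choose n j * Nat.choose (i + j) n =
    ∑ j ∈ Finset.range (n + 1), ∑ i ∈ Finset.range j,
        Nat.choose n i * (Nat.choose n j) ^ 2 := by
  have full := (sum_sum_choose_mul_choose_mul_choose_add n).trans
    (sum_sum_choose_mul_choose_sq n).symm
  rw [sum_range_sum_range_eq_triangles_add_diag, sum_range_sum_range_eq_triangles_add_diag] at full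
  have upper_left :
      ∑ j ∈ range (n + 1), ∑ i ∈ range j, n.choose j * n.choose i * (j + i).choose n
      = ∑ j ∈ range (n + 1), ∑ i ∈ range j, n.choose i * n.choose j * (i + j).choose n :=
    sum_congr rfl fun j _ => sum_congr rfl fun i _ => by rw [mul_comm (n.choose j), add_comm]
  have upper_right : ∑ j ∈ range (n + 1), ∑ i ∈ range j, n.choose j * n.choose i ^ 2
      = ∑ j ∈ range (n + 1), ∑ i ∈ range j, n.choose i * n.choose j ^ 2 := by
    refine Eq.trans ?_ (sum_triangle_reflect n fun i j => n.choose i * n.choose j ^ 2)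
    refine sum_congr rfl fun j hj => sum_congr rfl fun i hi => ?_
    rw [mem_range] at hi hj
    rw [Nat.choose_symm (by omega : j ≤ n), Nat.choose_symm (by omega : i ≤ n)]
  have diag : ∑ i ∈ range (n + 1), n.choose i * n.choose i * (i + i).choose n
      = ∑ i ∈ range (n + 1), n.choose i * n.choose i ^ 2 := by
    simpa only [sq, two_mul, pow_succ, pow_zero, one_mul, mul_assoc]
      using sum_range_choose_sq_mul_choose_two_mul n
  rw [upper_left, upper_right, diag] at full
  omega

theorem stmt_10 (n : ℕ) (hn : 0 < n) :
    ∑ j ∈ Finset.range (n + 1), ∑ i ∈ Finset.range j,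
        Nat.choose n i * Nat.choose n j * Nat.choose (i + j) n =
    ∑ j ∈ Finset.range (n + 1), ∑ i ∈ Finset.range j,
        Nat.choose n i * (Nat.choose n j) ^ 2 :=
  stmt_10_general n
end

section
/- For every positive integer n, ∑_{i=0}^{n} C(n, i)^2 * C(2i, n) = ∑_{i=0}^{n} C(n, i)^3. -/
/-!
Expand `C(2i, n) = ∑_{j + l = n} C(i, j) C(i, l)` by Vandermonde and rewrite each
`C(n, i) C(i, j)` as `C(n, j) C(n - j, n - i)`. After exchanging the sums, the inner sum over `i`
is `∑_k C(l, k) C(j, k) = C(n, j)`, again by Vandermonde, and `C(n, l) = C(n, j)` turns each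
summand into `C(n, j)^3`.
-/

open Finset

namespace Nat

lemma choose_mul_choose_of_le {n i j : ℕ} (hi : i ≤ n) (hj : j ≤ n) :
    n.choose i * i.choose j = n.choose j * (n - j).choose (n - i) := by
  rcases le_or_gt j i with hji | hij
  · rw [choose_mul hji, ← choose_symm (by omega : n - i ≤ n - j)]
    congr 2
    omega
  · rw [choose_eq_zero_of_lt hij, choose_eq_zero_of_lt (by omega : n - j < n - i), mul_zero,
      mul_zero]

lemma sum_range_choose_mul_choose_of_le (a : ℕ) {b n : ℕ} (hb : b ≤ n) :
    ∑ k ∈ range (n + 1), a.choose k * b.choose k = (a + b).choose b := by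
  rw [add_choose_eq, Finset.Nat.sum_antidiagonal_eq_sum_range_succ_mk,
    ← sum_subset (range_subset_range.2 (by omega : b + 1 ≤ n + 1))]
  · refine sum_congr rfl fun k hk => ?_
    rw [choose_symm (Nat.lt_succ_iff.1 (mem_range.1 hk))]
  · intro k _ hk
    exact mul_eq_zero_of_right _ (choose_eq_zero_of_lt (by simpa using hk))

lemma sum_range_choose_sub_mul_choose_sub (a : ℕ) {b n : ℕ} (hb : b ≤ n) :
    ∑ i ∈ range (n + 1), a.choose (n - i) * b.choose (n - i) = (a + b).choose b := by
  rw [← sum_range_choose_mul_choose_of_le a hb,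
    ← sum_range_reflect (fun k => a.choose k * b.choose k)]
  simp only [Nat.add_sub_cancel]

lemma choose_sq_mul_choose_two_mul_eq_sum {n i : ℕ} (hi : i ≤ n) :
    n.choose i ^ 2 * (2 * i).choose n =
      ∑ p ∈ antidiagonal n,
        n.choose p.1 * n.choose p.2 * (p.2.choose (n - i) * p.1.choose (n - i)) := by
  rw [two_mul, add_choose_eq, mul_sum]
  refine sum_congr rfl fun p hp => ?_
  have hp : p.1 + p.2 = n := mem_antidiagonal.1 hp
  calc n.choose i ^ 2 * (i.choose p.1 * i.choose p.2)
      = (n.choose i * i.choose p.1) * (n.choose i * i.choose p.2) := by ring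
    _ = (n.choose p.1 * (n - p.1).choose (n - i)) *
          (n.choose p.2 * (n - p.2).choose (n - i)) := by
      rw [choose_mul_choose_of_le hi (by omega), choose_mul_choose_of_le hi (by omega)]
    _ = _ := by
      rw [show n - p.1 = p.2 by omega, show n - p.2 = p.1 by omega]
      ring

end Nat

theorem stmt_11_general (n : ℕ) :
    ∑ i ∈ Finset.range (n + 1), (Nat.choose n i) ^ 2 * Nat.choose (2 * i) n =
    ∑ i ∈ Finset.range (n + 1), (Nat.choose n i) ^ 3 := by
  calc ∑ i ∈ range (n + 1), n.choose i ^ 2 * (2 * i).choose n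
      = ∑ i ∈ range (n + 1), ∑ p ∈ antidiagonal n,
          n.choose p.1 * n.choose p.2 * (p.2.choose (n - i) * p.1.choose (n - i)) :=
        sum_congr rfl fun i hi =>
          Nat.choose_sq_mul_choose_two_mul_eq_sum (Nat.lt_succ_iff.1 (mem_range.1 hi))
    _ = ∑ p ∈ antidiagonal n, n.choose p.1 * n.choose p.2 *
          ∑ i ∈ range (n + 1), p.2.choose (n - i) * p.1.choose (n - i) := by
      rw [sum_comm]
      simp only [mul_sum]
    _ = ∑ p ∈ antidiagonal n, n.choose p.1 ^ 3 := by
      refine sum_congr rfl fun ⟨j, l⟩ hp => ?_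
      obtain rfl : j + l = n := mem_antidiagonal.1 hp
      rw [Nat.sum_range_choose_sub_mul_choose_sub l (Nat.le_add_right j l), add_comm l j,
        ← Nat.choose_symm_add]
      ring
    _ = ∑ i ∈ range (n + 1), n.choose i ^ 3 :=
      Finset.Nat.sum_antidiagonal_eq_sum_range_succ_mk _ n

theorem stmt_11 (n : ℕ) (hn : 0 < n) :
    ∑ i ∈ Finset.range (n + 1), (Nat.choose n i) ^ 2 * Nat.choose (2 * i) n =
    ∑ i ∈ Finset.range (n + 1), (Nat.choose n i) ^ 3 :=
  stmt_11_general n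
end

section
/- Let a(n) = ∑_{i=0}^{n} C(n, i)^2 * C(2i, n). Then for every nonnegative integer n, (n+2)^2 * a(n+2) - (7n^2 + 21n + 16) * a(n+1) - 8 * (n+1)^2 * a(n) = 0. -/
/-!
With the companion sum `b n = ∑ C(n, i)^2 C(2i, n+1)`, Zeilberger-style telescoping certificates
give the first-order system
  `(n+1) a(n+1) = (5n+2) a(n) + 6n b(n)`,   `(n+2) b(n+1) = (3n+2) a(n) + 2n b(n)`,
and eliminating `b` yields the recurrence.  Each certificate identity becomes a rational-function
identity after dividing by `C(n, j)^2 C(2j, n)`.  The ratio `C(2j+2, n) / C(2j, n)` is only used in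
the product form `(2j+2-n)(2j+1-n) C(2j+2, n) = (2j+2)(2j+1) C(2j, n)`, which holds without
exception, so the zeros of the summand at `n = 2j+1, 2j+2` need no separate treatment.
-/

/-- `a n = ∑_{i=0}^{n} C(n, i)^2 * C(2i, n)`, viewed in `ℤ`. -/
def a (n : ℕ) : ℤ :=
  ∑ i ∈ Finset.range (n + 1), ((Nat.choose n i : ℤ)) ^ 2 * (Nat.choose (2 * i) n : ℤ)

open Finset

theorem cast_add_one_mul_choose_succ {K : Type*} [CommRing K] (m k : ℕ) :
    ((k : K) + 1) * (m.choose (k + 1) : K) = ((m : K) - k) * (m.choose k : K) := by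
  rcases le_or_gt k m with h | h
  · have := congrArg (Nat.cast : ℕ → K) (Nat.choose_succ_right_eq m k)
    push_cast [Nat.cast_sub h] at this
    linear_combination this
  · simp [Nat.choose_eq_zero_of_lt h, Nat.choose_eq_zero_of_lt (h.trans (Nat.lt_succ_self k))]

theorem cast_add_one_sub_mul_choose_succ_left {K : Type*} [CommRing K] (m k : ℕ) :
    ((m : K) + 1 - k) * ((m + 1).choose k : K) = ((m : K) + 1) * (m.choose k : K) := by
  rcases le_or_gt k (m + 1) with h | h
  · have := congrArg (Nat.cast : ℕ → K) (Nat.choose_mul_succ_eq m k)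
    push_cast [Nat.cast_sub h] at this
    linear_combination -this
  · simp [Nat.choose_eq_zero_of_lt h, Nat.choose_eq_zero_of_lt (Nat.lt_of_succ_lt h)]

theorem cast_mul_choose_add_two_left {K : Type*} [CommRing K] (m k : ℕ) :
    ((m : K) + 2 - k) * ((m : K) + 1 - k) * ((m + 2).choose k : K) =
      ((m : K) + 2) * ((m : K) + 1) * (m.choose k : K) := by
  have h₁ := cast_add_one_sub_mul_choose_succ_left (K := K) m k
  have h₂ : ((m : K) + 2 - k) * ((m + 2).choose k : K) =
      ((m : K) + 2) * ((m + 1).choose k : K) := by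
    convert cast_add_one_sub_mul_choose_succ_left (K := K) (m + 1) k using 2 <;> push_cast <;> ring
  linear_combination ((m : K) + 1 - k) * h₂ + ((m : K) + 2) * h₁

theorem summand_a_succ_rel_of_ratios {K : Type*} [Field K] {n j A c P Q R S : K}
    (hn : n + 1 ≠ 0) (hj : j + 1 ≠ 0)
    (hA : (j + 1) * A = (n - j) * c) (hQ : (n + 1) * Q = (2 * j - n) * P)
    (hS : (n + 1) * S = (2 * j + 2 - n) * R)
    (hR : (2 * j + 2 - n) * (2 * j + 1 - n) * R = (2 * j + 2) * (2 * j + 1) * P) :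
    (n + 1) * (A + c) ^ 2 * S - (5 * n + 2) * A ^ 2 * R - 6 * n * A ^ 2 * S =
      A ^ 2 * (6 * (j + 2) * S - (10 * j + 12) * R) -
        c ^ 2 * (6 * (j + 1) * Q - (10 * j + 2) * P) := by
  obtain rfl : A = (n - j) * c / (j + 1) := by rw [eq_div_iff hj]; linear_combination hA
  obtain rfl : Q = (2 * j - n) * P / (n + 1) := by rw [eq_div_iff hn]; linear_combination hQ
  obtain rfl : S = (2 * j + 2 - n) * R / (n + 1) := by rw [eq_div_iff hn]; linear_combination hS
  rw [← sub_eq_zero]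
  calc _ = (4 * n - 3 * j + 1) * c ^ 2 / ((j + 1) * (n + 1)) *
        ((2 * j + 2 - n) * (2 * j + 1 - n) * R - (2 * j + 2) * (2 * j + 1) * P) := by
        field_simp
        ring
    _ = 0 := by rw [hR, sub_self, mul_zero]

theorem summand_b_succ_rel_of_ratios {K : Type*} [Field K] {n j A c P Q R S U : K}
    (hn : n + 1 ≠ 0) (hn' : n + 2 ≠ 0) (hj : j + 1 ≠ 0)
    (hA : (j + 1) * A = (n - j) * c) (hQ : (n + 1) * Q = (2 * j - n) * P)
    (hS : (n + 1) * S = (2 * j + 2 - n) * R) (hU : (n + 2) * U = (2 * j + 1 - n) * S)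
    (hR : (2 * j + 2 - n) * (2 * j + 1 - n) * R = (2 * j + 2) * (2 * j + 1) * P) :
    (n + 2) * (A + c) ^ 2 * U - (3 * n + 2) * A ^ 2 * R - 2 * n * A ^ 2 * S =
      A ^ 2 * (2 * (j + 2) * S - (6 * j + 8) * R) -
        c ^ 2 * (2 * (j + 1) * Q - (6 * j + 2) * P) := by
  obtain rfl : A = (n - j) * c / (j + 1) := by rw [eq_div_iff hj]; linear_combination hA
  obtain rfl : Q = (2 * j - n) * P / (n + 1) := by rw [eq_div_iff hn]; linear_combination hQ
  obtain rfl : U = (2 * j + 1 - n) * S / (n + 2) := by rw [eq_div_iff hn']; linear_combination hU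
  obtain rfl : S = (2 * j + 2 - n) * R / (n + 1) := by rw [eq_div_iff hn]; linear_combination hS
  rw [← sub_eq_zero]
  calc _ = (2 * n - j + 1) * c ^ 2 / ((j + 1) * (n + 1)) *
        ((2 * j + 2 - n) * (2 * j + 1 - n) * R - (2 * j + 2) * (2 * j + 1) * P) := by
        field_simp
        ring
    _ = 0 := by rw [hR, sub_self, mul_zero]

def b (n : ℕ) : ℤ :=
  ∑ i ∈ range (n + 1), (n.choose i : ℤ) ^ 2 * ((2 * i).choose (n + 1) : ℤ)

/-- The certificates found by Zeilberger's algorithm for `(p, q) = (6, 10)` and `(2, 6)`; the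
term with `C(n, i)` sits at index `i + 1`, so that index `0` stands for `C(n, -1) = 0`. -/
def certificate (p q : ℤ) (n : ℕ) : ℕ → ℤ
  | 0 => 0
  | i + 1 => (n.choose i : ℤ) ^ 2 *
      (p * (i + 1) * ((2 * i).choose (n + 1) : ℤ) - (q * i + 2) * ((2 * i).choose n : ℤ))

theorem sum_range_add_two_choose_sq_mul (n : ℕ) (f : ℕ → ℤ) :
    ∑ i ∈ range (n + 2), (n.choose i : ℤ) ^ 2 * f i =
      ∑ i ∈ range (n + 1), (n.choose i : ℤ) ^ 2 * f i := by
  simp [sum_range_succ _ (n + 1), Nat.choose_succ_self]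

theorem sum_range_eq_zero_of_eq_certificate_sub (p q : ℤ) (n : ℕ) (f : ℕ → ℤ)
    (hf : ∀ i, f i = certificate p q n (i + 1) - certificate p q n i) :
    ∑ i ∈ range (n + 2), f i = 0 := by
  rw [sum_congr rfl fun i _ => hf i, sum_range_sub]
  simp [certificate]

theorem summand_a_succ_rel (n i : ℕ) :
    ((n : ℤ) + 1) * ((n + 1).choose i : ℤ) ^ 2 * ((2 * i).choose (n + 1) : ℤ)
      - (5 * n + 2) * (n.choose i : ℤ) ^ 2 * ((2 * i).choose n : ℤ)
      - 6 * n * (n.choose i : ℤ) ^ 2 * ((2 * i).choose (n + 1) : ℤ) =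
      certificate 6 10 n (i + 1) - certificate 6 10 n i := by
  cases i with
  | zero => cases n <;> simp [certificate]
  | succ j =>
    rw [show 2 * (j + 1) = 2 * j + 2 by ring]
    simp only [certificate]
    qify
    have hA := cast_add_one_mul_choose_succ (K := ℚ) n j
    have hQ := cast_add_one_mul_choose_succ (K := ℚ) (2 * j) n
    have hS := cast_add_one_mul_choose_succ (K := ℚ) (2 * j + 2) n
    have hR := cast_mul_choose_add_two_left (K := ℚ) (2 * j) n
    push_cast at hQ hS hR
    have := summand_a_succ_rel_of_ratios (by positivity) (by positivity) hA hQ hS hR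
    rw [Nat.choose_succ_succ']
    push_cast at this ⊢
    linear_combination this

theorem summand_b_succ_rel (n i : ℕ) :
    ((n : ℤ) + 2) * ((n + 1).choose i : ℤ) ^ 2 * ((2 * i).choose (n + 2) : ℤ)
      - (3 * n + 2) * (n.choose i : ℤ) ^ 2 * ((2 * i).choose n : ℤ)
      - 2 * n * (n.choose i : ℤ) ^ 2 * ((2 * i).choose (n + 1) : ℤ) =
      certificate 2 6 n (i + 1) - certificate 2 6 n i := by
  cases i with
  | zero => cases n <;> simp [certificate]
  | succ j =>
    rw [show 2 * (j + 1) = 2 * j + 2 by ring]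
    simp only [certificate]
    qify
    have hA := cast_add_one_mul_choose_succ (K := ℚ) n j
    have hQ := cast_add_one_mul_choose_succ (K := ℚ) (2 * j) n
    have hS := cast_add_one_mul_choose_succ (K := ℚ) (2 * j + 2) n
    have hU : ((n : ℚ) + 2) * ((2 * j + 2).choose (n + 2) : ℚ) =
        (2 * j + 1 - n) * ((2 * j + 2).choose (n + 1) : ℚ) := by
      have := cast_add_one_mul_choose_succ (K := ℚ) (2 * j + 2) (n + 1)
      push_cast at this
      linear_combination this
    have hR := cast_mul_choose_add_two_left (K := ℚ) (2 * j) n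
    push_cast at hQ hS hR
    have := summand_b_succ_rel_of_ratios (by positivity) (by positivity) (by positivity)
      hA hQ hS hU hR
    rw [Nat.choose_succ_succ']
    push_cast at this ⊢
    linear_combination this

theorem a_succ_rel (n : ℕ) :
    ((n : ℤ) + 1) * a (n + 1) - (5 * n + 2) * a n - 6 * n * b n = 0 := by
  rw [a, a, b, ← sum_range_add_two_choose_sq_mul n, ← sum_range_add_two_choose_sq_mul n,
    mul_sum, mul_sum, mul_sum, ← sum_sub_distrib, ← sum_sub_distrib]
  refine sum_range_eq_zero_of_eq_certificate_sub 6 10 n _ fun i => ?_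
  rw [← summand_a_succ_rel]
  ring

theorem b_succ_rel (n : ℕ) :
    ((n : ℤ) + 2) * b (n + 1) - (3 * n + 2) * a n - 2 * n * b n = 0 := by
  rw [a, b, b, ← sum_range_add_two_choose_sq_mul n, ← sum_range_add_two_choose_sq_mul n,
    mul_sum, mul_sum, mul_sum, ← sum_sub_distrib, ← sum_sub_distrib]
  refine sum_range_eq_zero_of_eq_certificate_sub 2 6 n _ fun i => ?_
  rw [← summand_b_succ_rel]
  ring

theorem stmt_12 (n : ℕ) :
    ((n : ℤ) + 2) ^ 2 * a (n + 2) - (7 * (n : ℤ) ^ 2 + 21 * n + 16) * a (n + 1) -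
      8 * ((n : ℤ) + 1) ^ 2 * a n = 0 := by
  have h := a_succ_rel (n + 1)
  push_cast at h
  linear_combination
    ((n : ℤ) + 2) * h + 6 * ((n : ℤ) + 1) * b_succ_rel n - 2 * ((n : ℤ) + 1) * a_succ_rel n
end
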